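/- arXiv:2312.04952 — 3 statements merged into one kernel-verified Lean document; each statement's English description precedes it below -/
import Mathlib

section
/- The mean distance of the equilateral m-star of total length L equals ρ(S_m) = (L/m²)(m − 2/3). -/
open MeasureTheory intervalIntegral

theorem integral_quadratic (p q r a b : ℝ) :
    ∫ x in a..b, (p * x ^ 2 + q * x + r) =
      p * (b ^ 3 - a ^ 3) / 3 + q * (b ^ 2 - a ^ 2) / 2 + r * (b - a) := by
  have hquad : IntervalIntegrable (fun x : ℝ => p * x ^ 2) volume a b :=
    (intervalIntegrable_pow 2).const_mul p
  have hlin : IntervalIntegrable (fun x : ℝ => q * x) volume a b :=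
    intervalIntegrable_id.const_mul q
  rw [integral_add (hquad.add hlin) intervalIntegrable_const, integral_add hquad hlin,
    intervalIntegral.integral_const_mul, intervalIntegral.integral_const_mul, integral_pow,
    integral_id, intervalIntegral.integral_const, smul_eq_mul]
  norm_num
  ring

/-- The mean distance of the equilateral `m`-star of total length `L` equals
`(L/m²)(m − 2/3)`. -/
theorem mean_distance_star (m : ℕ) (hm : 1 ≤ m) (L ℓ : ℝ)
    (hL : 0 < L) (hℓ : ℓ = L / m) :
    ((m : ℝ) / L) *
        (∫ x in (0:ℝ)..ℓ, (x ^ 2 / L + (((m : ℝ) - 2) / m) * x + L / (2 * m))) =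
      (L / (m : ℝ) ^ 2) * ((m : ℝ) - 2 / 3) := by
  have hm0 : (m : ℝ) ≠ 0 := by positivity
  have integrand : (fun x : ℝ => x ^ 2 / L + (((m : ℝ) - 2) / m) * x + L / (2 * m)) =
      fun x => L⁻¹ * x ^ 2 + ((m - 2) / m) * x + L / (2 * m) := by
    funext x
    ring
  rw [integrand, integral_quadratic, hℓ]
  field_simp
  ring
end

section
/- The mean distance of the equilateral flower graph F_m with m ≥ 1 petals and total length L > 0 equals ρ(F_m) = (L/(4m))·((2m−1)/m). -/
open MeasureTheory intervalIntegral

/-!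
On a petal of circumference `ℓ` the distance `min |t| (ℓ - |t|)`, `t = x - y`, is the norm of `t`
in `AddCircle ℓ`. That norm is `ℓ`-periodic, so its integral over the window `y ∈ [-ℓ/2, ℓ/2]`
does not depend on `x` and equals `∫ t in -ℓ/2..ℓ/2, |t| = ℓ²/4`; the same-petal double integral
is `ℓ³/4`. The cross-petal integrand separates, giving `ℓ³/2`. With `L = mℓ` the weighted sum
`(m ℓ³/4 + m(m-1) ℓ³/2) / L²` is the claimed value.
-/

theorem integral_abs_neg_self {a : ℝ} (ha : 0 ≤ a) : ∫ t in -a..a, |t| = a ^ 2 := by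
  have half : ∫ t in (0 : ℝ)..a, |t| = a ^ 2 / 2 := by
    rw [integral_congr (g := fun t => t) fun t ht => abs_of_nonneg (by
      rw [Set.uIcc_of_le ha] at ht; exact ht.1), integral_id]
    ring
  have hneg : ∫ t in -a..0, |t| = ∫ t in (0 : ℝ)..a, |t| := by
    simpa only [abs_neg, neg_zero] using (integral_comp_neg (a := 0) (b := a) (fun t => |t|)).symm
  rw [← integral_add_adjacent_intervals (b := 0) (continuous_abs.intervalIntegrable _ _)
    (continuous_abs.intervalIntegrable _ _), hneg, half]
  ring

theorem AddCircle.norm_coe_eq_min {p s : ℝ} (hp : 0 < p) (hs₀ : 0 ≤ s) (hsp : s ≤ p) :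
    ‖(s : AddCircle p)‖ = min s (p - s) := by
  rcases le_total s (p / 2) with hs | hs
  · rw [min_eq_left (by linarith), (norm_coe_eq_abs_iff p hp.ne').2 (by
      rw [abs_of_nonneg hs₀, abs_of_pos hp]; exact hs), abs_of_nonneg hs₀]
  · have hcoe : ((s - p : ℝ) : AddCircle p) = s := by
      rw [← coe_add_period, sub_add_cancel]
    rw [min_eq_right (by linarith), ← hcoe, (norm_coe_eq_abs_iff p hp.ne').2 (by
      rw [abs_of_nonpos (by linarith), abs_of_pos hp]; linarith), abs_of_nonpos (by linarith)]
    ring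

theorem AddCircle.norm_coe_eq_min_abs {p t : ℝ} (hp : 0 < p) (ht : |t| ≤ p) :
    ‖(t : AddCircle p)‖ = min |t| (p - |t|) := by
  rw [← norm_coe_eq_min hp (abs_nonneg t) ht]
  rcases abs_choice t with h | h <;> rw [h]
  rw [AddCircle.coe_neg, norm_neg]

theorem AddCircle.periodic_norm_coe (p : ℝ) :
    Function.Periodic (fun t : ℝ => ‖(t : AddCircle p)‖) p :=
  fun t => by simp only [coe_add_period]

theorem AddCircle.intervalIntegral_norm_coe {p : ℝ} (hp : 0 < p) (t : ℝ) :
    ∫ s in t..t + p, ‖(s : AddCircle p)‖ = p ^ 2 / 4 := by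
  rw [(periodic_norm_coe p).intervalIntegral_add_eq t (-(p / 2)),
    show -(p / 2) + p = p / 2 by ring,
    integral_congr fun s hs => (norm_coe_eq_abs_iff p hp.ne').2 ?_,
    integral_abs_neg_self (by linarith)]
  · ring
  · rw [Set.uIcc_of_le (by linarith), Set.mem_Icc] at hs
    rw [abs_of_pos hp]; exact abs_le.2 hs

theorem integral_circle_dist {ℓ x : ℝ} (hℓ : 0 < ℓ) (hx : x ∈ Set.Icc (-(ℓ / 2)) (ℓ / 2)) :
    ∫ y in -(ℓ / 2)..ℓ / 2, min |x - y| (ℓ - |x - y|) = ℓ ^ 2 / 4 := by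
  have hnorm : ∀ y ∈ Set.uIcc (-(ℓ / 2)) (ℓ / 2),
      min |x - y| (ℓ - |x - y|) = ‖((x - y : ℝ) : AddCircle ℓ)‖ := fun y hy => by
    rw [Set.uIcc_of_le (by linarith), Set.mem_Icc] at hy
    rw [AddCircle.norm_coe_eq_min_abs hℓ (abs_le.2 ⟨by linarith [hx.1], by linarith [hx.2]⟩)]
  rw [integral_congr hnorm, integral_comp_sub_left (fun t => ‖(t : AddCircle ℓ)‖),
    show x - -(ℓ / 2) = x - ℓ / 2 + ℓ by ring, AddCircle.intervalIntegral_norm_coe hℓ]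

theorem integral_integral_add {f g : ℝ → ℝ} {a b c d : ℝ}
    (hf : IntervalIntegrable f volume a b) (hg : IntervalIntegrable g volume c d) :
    ∫ x in a..b, ∫ y in c..d, (f x + g y) =
      (d - c) * (∫ x in a..b, f x) + (b - a) * ∫ y in c..d, g y := by
  have inner : ∀ x, ∫ y in c..d, (f x + g y) = (d - c) * f x + ∫ y in c..d, g y := fun x => by
    rw [integral_add intervalIntegrable_const hg, intervalIntegral.integral_const, smul_eq_mul]
  simp only [inner]
  rw [integral_add (hf.const_mul _) intervalIntegrable_const, intervalIntegral.integral_const_mul,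
    intervalIntegral.integral_const, smul_eq_mul]

theorem integral_integral_circle_dist {ℓ : ℝ} (hℓ : 0 < ℓ) :
    ∫ x in -(ℓ / 2)..ℓ / 2, ∫ y in -(ℓ / 2)..ℓ / 2, min |x - y| (ℓ - |x - y|) = ℓ ^ 3 / 4 := by
  have hle : -(ℓ / 2) ≤ ℓ / 2 := by linarith
  rw [integral_congr fun x hx => integral_circle_dist hℓ (Set.uIcc_of_le hle ▸ hx),
    intervalIntegral.integral_const, smul_eq_mul]
  ring

/-- The mean distance of the equilateral flower `F_m` with `m ≥ 1` petals and total
length `L > 0` equals `(L/(4m))·((2m−1)/m)`.  Each petal is parametrised by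
`[−ℓ/2, ℓ/2]` (`ℓ = L/m`), with central vertex `0` and `±ℓ/2` identified; the
same-petal distance is the circle distance `min |x−y| (ℓ − |x−y|)`, and the
cross-petal distance is `|x| + |y|`.  The mean distance is the double average of
the distance over the flower, i.e. `(1/L²)` times the sum over the `m` same-petal
double integrals and the `m(m−1)` cross-petal double integrals. -/
theorem mean_distance_equilateral_flower (m : ℕ) (hm : 1 ≤ m) (L ℓ : ℝ)
    (hL : 0 < L) (hℓ : ℓ = L / m) :
    (1 / L ^ 2) *
        ((m : ℝ) *
            (∫ x in (-(ℓ / 2))..(ℓ / 2), ∫ y in (-(ℓ / 2))..(ℓ / 2),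
              min |x - y| (ℓ - |x - y|)) +
          (m : ℝ) * ((m : ℝ) - 1) *
            (∫ x in (-(ℓ / 2))..(ℓ / 2), ∫ y in (-(ℓ / 2))..(ℓ / 2), (|x| + |y|))) =
      (L / (4 * m)) * ((2 * (m : ℝ) - 1) / m) := by
  have hm₀ : (0 : ℝ) < m := by exact_mod_cast hm
  have hℓ₀ : 0 < ℓ := hℓ ▸ div_pos hL hm₀
  have cross : ∫ x in -(ℓ / 2)..ℓ / 2, ∫ y in -(ℓ / 2)..ℓ / 2, (|x| + |y|) = ℓ ^ 3 / 2 := by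
    rw [integral_integral_add (continuous_abs.intervalIntegrable _ _)
      (continuous_abs.intervalIntegrable _ _), integral_abs_neg_self (by positivity)]
    ring
  rw [integral_integral_circle_dist hℓ₀, cross, hℓ]
  field_simp
  ring
end

section
/- Let ℓ₁,…,ℓ_m > 0 with ∑ℓᵢ = L. Define ρ(F) = (1/(4L²)) ∑ᵢ [ℓᵢ³ + ∑_{j≠i} ℓᵢℓⱼ(ℓᵢ+ℓⱼ)] (the mean distance of the flower with petal lengths ℓᵢ). Then ρ(F) ≥ ((2m−1)/(4m²))·L, with equality if and only if ℓ₁ = ⋯ = ℓ_m = L/m. -/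
/-!
Writing `L = ∑ ℓᵢ`, `Q = ∑ ℓᵢ²`, `T = ∑ ℓᵢ³`, the double sum equals `2LQ - T = ∑ f(ℓᵢ)` with
`f(x) = 2Lx² - x³`. Since `∑ (ℓᵢ - a) = 0` for the mean `a = L/m`, subtracting the tangent line of
`f` at `a` leaves `2LQ - T - m f(a) = ∑ (2L - 2a - ℓᵢ)(ℓᵢ - a)²`. For `m ≥ 2` every weight
`2L - 2a - ℓᵢ = (L - ℓᵢ) + (L - 2a)` is positive, and for `m = 1` every square vanishes.
-/

open Finset

variable {ι : Type*} [Fintype ι]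

section CommRing

variable {R : Type*} [CommRing R] [DecidableEq ι]

lemma sum_erase_mul_mul_add (ℓ : ι → R) (i : ι) :
    ∑ j ∈ univ.erase i, ℓ i * ℓ j * (ℓ i + ℓ j)
      = ℓ i ^ 2 * (∑ j, ℓ j - ℓ i) + ℓ i * (∑ j, ℓ j ^ 2 - ℓ i ^ 2) := by
  rw [← sum_erase_eq_sub (mem_univ i), ← sum_erase_eq_sub (mem_univ i), mul_sum, mul_sum,
    ← sum_add_distrib]
  exact sum_congr rfl fun j _ => by ring

lemma sum_pow_three_add_sum_erase_eq (ℓ : ι → R) :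
    ∑ i, (ℓ i ^ 3 + ∑ j ∈ univ.erase i, ℓ i * ℓ j * (ℓ i + ℓ j))
      = 2 * (∑ i, ℓ i) * ∑ i, ℓ i ^ 2 - ∑ i, ℓ i ^ 3 := by
  have hterm : ∀ i, ℓ i ^ 3 + ∑ j ∈ univ.erase i, ℓ i * ℓ j * (ℓ i + ℓ j)
      = ℓ i ^ 2 * ∑ j, ℓ j + (∑ j, ℓ j ^ 2) * ℓ i - ℓ i ^ 3 := fun i => by
    rw [sum_erase_mul_mul_add]; ring
  simp only [hterm, sum_sub_distrib, sum_add_distrib, ← sum_mul, ← mul_sum]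
  ring

end CommRing

lemma two_mul_sum_mul_sum_sq_sub_sum_pow_three_eq {K : Type*} [Field K] (ℓ : ι → K) {L : K}
    (hsum : ∑ i, ℓ i = L) (hcard : (Fintype.card ι : K) ≠ 0) :
    2 * L * ∑ i, ℓ i ^ 2 - ∑ i, ℓ i ^ 3
      = (2 * Fintype.card ι - 1) / Fintype.card ι ^ 2 * L ^ 3
        + ∑ i, (2 * L - 2 * (L / Fintype.card ι) - ℓ i) * (ℓ i - L / Fintype.card ι) ^ 2 := by
  set a := L / Fintype.card ι
  have htangent : ∀ i, (2 * L - 2 * a - ℓ i) * (ℓ i - a) ^ 2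
      = (2 * L * ℓ i ^ 2 - ℓ i ^ 3) - (4 * L * a - 3 * a ^ 2) * ℓ i
        - (2 * L * a ^ 2 - a ^ 3) + (4 * L * a - 3 * a ^ 2) * a := fun i => by ring
  simp only [htangent, sum_add_distrib, sum_sub_distrib, ← mul_sum, sum_const, card_univ,
    nsmul_eq_mul, hsum]
  simp only [a]
  field_simp
  ring

section LinearOrderedField

variable {K : Type*} [Field K] [LinearOrder K] [IsStrictOrderedRing K]

lemma eq_mean_or_tangent_weight_pos (ℓ : ι → K) (hpos : ∀ i, 0 < ℓ i) {L : K}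
    (hsum : ∑ i, ℓ i = L) (i : ι) :
    ℓ i = L / Fintype.card ι ∨ 0 < 2 * L - 2 * (L / Fintype.card ι) - ℓ i := by
  subst hsum
  rcases Nat.lt_or_ge (Fintype.card ι) 2 with hcard | hcard
  · left
    have : Subsingleton ι := Fintype.card_le_one_iff_subsingleton.mp (by omega)
    have hone : Fintype.card ι = 1 := le_antisymm (by omega) (Fintype.card_pos_iff.mpr ⟨i⟩)
    rw [hone, Fintype.sum_subsingleton _ i]
    simp
  · right
    have : Nontrivial ι := Fintype.one_lt_card_iff_nontrivial.mp hcard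
    obtain ⟨j, hji⟩ := exists_ne i
    have hlt : ℓ i < ∑ k, ℓ k :=
      single_lt_sum hji (mem_univ i) (mem_univ j) (hpos j) fun k _ _ => (hpos k).le
    have hcard' : (2 : K) ≤ Fintype.card ι := by exact_mod_cast hcard
    have hmean : 2 * ((∑ j, ℓ j) / Fintype.card ι) ≤ ∑ j, ℓ j := by
      rw [mul_div_assoc', div_le_iff₀ (by positivity)]
      nlinarith [(hpos i).trans hlt]
    linarith

lemma tangent_deficit_nonneg {L a x : K} (h : x = a ∨ 0 < 2 * L - 2 * a - x) :
    0 ≤ (2 * L - 2 * a - x) * (x - a) ^ 2 := by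
  rcases h with rfl | hw
  · simp
  · positivity

lemma tangent_deficit_eq_zero_iff {L a x : K} (h : x = a ∨ 0 < 2 * L - 2 * a - x) :
    (2 * L - 2 * a - x) * (x - a) ^ 2 = 0 ↔ x = a := by
  rcases h with rfl | hw
  · simp
  · rw [mul_eq_zero, pow_eq_zero_iff two_ne_zero, sub_eq_zero (a := x)]
    exact or_iff_right hw.ne'

end LinearOrderedField

/-- For a flower graph on `m` petals of lengths `ℓ₁,…,ℓ_m > 0` summing to `L`, the
mean distance `ρ(F) = (1/(4L²)) ∑ᵢ [ℓᵢ³ + ∑_{j≠i} ℓᵢℓⱼ(ℓᵢ+ℓⱼ)]` satisfies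
`ρ(F) ≥ ((2m−1)/(4m²))·L`, with equality iff the flower is equilateral. -/
theorem flower_mean_distance_lower_bound (m : ℕ) (hm : 0 < m) (L : ℝ) (hL : 0 < L)
    (ℓ : Fin m → ℝ) (hpos : ∀ i, 0 < ℓ i) (hsum : ∑ i, ℓ i = L) :
    ((2 * (m : ℝ) - 1) / (4 * (m : ℝ) ^ 2)) * L ≤
        (1 / (4 * L ^ 2)) *
          ∑ i, (ℓ i ^ 3 + ∑ j ∈ univ.erase i, ℓ i * ℓ j * (ℓ i + ℓ j)) ∧
      ((1 / (4 * L ^ 2)) *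
            (∑ i, (ℓ i ^ 3 + ∑ j ∈ univ.erase i, ℓ i * ℓ j * (ℓ i + ℓ j))) =
          ((2 * (m : ℝ) - 1) / (4 * (m : ℝ) ^ 2)) * L ↔
        ∀ i, ℓ i = L / m) := by
  have hweight := eq_mean_or_tangent_weight_pos ℓ hpos hsum
  have hidentity := two_mul_sum_mul_sum_sq_sub_sum_pow_three_eq ℓ hsum
    (by rw [Fintype.card_fin]; positivity)
  simp only [Fintype.card_fin] at hidentity hweight
  set D := ∑ i, (2 * L - 2 * (L / m) - ℓ i) * (ℓ i - L / m) ^ 2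
  have hrho : (1 / (4 * L ^ 2)) * ∑ i, (ℓ i ^ 3 + ∑ j ∈ univ.erase i, ℓ i * ℓ j * (ℓ i + ℓ j))
      = (2 * m - 1) / (4 * m ^ 2) * L + D / (4 * L ^ 2) := by
    rw [sum_pow_three_add_sum_erase_eq, hsum, hidentity]
    field_simp
  have hD : 0 ≤ D := sum_nonneg fun i _ => tangent_deficit_nonneg (hweight i)
  have hD_eq_zero : D = 0 ↔ ∀ i, ℓ i = L / m := by
    simp only [D, sum_eq_zero_iff_of_nonneg fun i _ => tangent_deficit_nonneg (hweight i),
      mem_univ, true_imp_iff, tangent_deficit_eq_zero_iff (hweight _)]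
  rw [hrho, ← hD_eq_zero]
  constructor
  · linarith [div_nonneg hD (by positivity : (0 : ℝ) ≤ 4 * L ^ 2)]
  · rw [add_eq_left, div_eq_zero_iff]
    exact or_iff_left (by positivity)
end
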